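/- Let t₀ > 0 and let X : (0,∞) → H be twice continuously differentiable and satisfy the Dist-AGM dynamics Ẍ(t) + (3/t)·Ẋ(t) + t^{−β}·∇F(X(t)) + L̃X(t) = 0 for all t > 0. Define for t ≥ t₀ the energy E(t) = (1/2)·‖t·Ẋ(t) + 2(X(t) − X*)‖² + (t²/2)·⟨X(t) − X*, L̃(X(t) − X*)⟩ + t^{2−β}·(F(X(t)) − F*) + ∫_{t₀}^{t} s·⟨X(s) − X*, L̃(X(s) − X*)⟩ ds + 2·∫_{t₀}^{t} s^{1−β}·(F* − F(X(s)) − ⟨∇F(X(s)), X* − X(s)⟩) ds + β·∫_{t₀}^{t} s^{1−β}·(F(X(s)) − F*) ds. Then E is conserved: for all t ≥ t₀, E(t) = (1/2)·‖t₀·Ẋ(t₀) + 2(X(t₀) − X*)‖² + (t₀²/2)·⟨X(t₀) − X*, L̃(X(t₀) − X*)⟩ + t₀^{2−β}·(F(X(t₀)) − F*). -/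

import Mathlib

/-!
Write `E(t)` for the pointwise part of the energy. Multiplying the equation by `t` shows that
`W(t) = t • Ẋ(t) + 2 • (X(t) - X*)` has derivative `-(t^(1-β) • ∇F(X) + t • L̃(X - X*))`
(using `L̃ X* = 0`). With this and the symmetry of `L̃`, differentiating `E` gives
`E'(t) = -(t ⟪X - X*, L̃(X - X*)⟫ + 2 t^(1-β) D_F(X*, X) + β t^(1-β) (F(X) - F*))`,
where `D_F` is the Bregman divergence, and the fundamental theorem of calculus on `[t₀, t]`
gives the conservation law.
-/

open scoped RealInnerProductSpace
open Set MeasureTheory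

section

variable {H : Type*} [NormedAddCommGroup H] [InnerProductSpace ℝ H]

theorem ContDiff.continuous_gradient [CompleteSpace H] {F : H → ℝ} (hF : ContDiff ℝ 1 F) :
    Continuous (gradient F) :=
  (InnerProductSpace.toDual ℝ H).symm.continuous.comp (hF.continuous_fderiv one_ne_zero)

theorem HasDerivAt.inner_map_self {L : H →L[ℝ] H} (hsym : ∀ x y : H, ⟪L x, y⟫ = ⟪x, L y⟫)
    {Y : ℝ → H} {y : H} {u : ℝ} (hY : HasDerivAt Y y u) :
    HasDerivAt (fun s => ⟪Y s, L (Y s)⟫) (2 * ⟪y, L (Y u)⟫) u := by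
  refine (hY.inner ℝ (L.hasFDerivAt.comp_hasDerivAt u hY)).congr_deriv ?_
  rw [Function.comp_apply, ← hsym, real_inner_comm]
  ring

end

theorem hasDerivAt_smul_deriv_add_two_smul_sub {E : Type*} [NormedAddCommGroup E]
    [NormedSpace ℝ E] {X : ℝ → E} {a : E} {u : ℝ} (x : E)
    (hX : HasDerivAt X (deriv X u) u) (hV : HasDerivAt (deriv X) a u) :
    HasDerivAt (fun s => s • deriv X s + (2 : ℝ) • (X s - x))
      (u • a + (3 : ℝ) • deriv X u) u := by
  refine (((hasDerivAt_id u).smul hV).add ((hX.sub_const x).const_smul (2 : ℝ))).congr_deriv ?_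
  simp only [id, one_smul]
  module

namespace DistAGM

variable {H : Type*} [NormedAddCommGroup H] [InnerProductSpace ℝ H] [CompleteSpace H]
  (F : H → ℝ) (L : H →L[ℝ] H) (Xs : H) (β : ℝ) (X : ℝ → H)

noncomputable def energy (t : ℝ) : ℝ :=
  (1 / 2) * ‖t • deriv X t + (2 : ℝ) • (X t - Xs)‖ ^ 2
    + (t ^ 2 / 2) * ⟪X t - Xs, L (X t - Xs)⟫
    + t ^ (2 - β) * (F (X t) - F Xs)

noncomputable def dissipation (s : ℝ) : ℝ :=
  s * ⟪X s - Xs, L (X s - Xs)⟫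
    + 2 * (s ^ (1 - β) * (F Xs - F (X s) - ⟪gradient F (X s), Xs - X s⟫))
    + β * (s ^ (1 - β) * (F (X s) - F Xs))

variable {F L Xs β X}

theorem hasDerivAt_energy (hsym : ∀ x y : H, ⟪L x, y⟫ = ⟪x, L y⟫) (hXs : L Xs = 0)
    {u : ℝ} (hu : 0 < u) (hXu : HasDerivAt X (deriv X u) u)
    (hVu : HasDerivAt (deriv X) (deriv (deriv X) u) u) (hFu : DifferentiableAt ℝ F (X u))
    (hode : deriv (deriv X) u + (3 / u) • deriv X u
      + (u ^ (-β)) • gradient F (X u) + L (X u) = 0) :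
    HasDerivAt (energy F L Xs β X) (-dissipation F L Xs β X u) u := by
  have hpow₁ : u * u ^ (-β) = u ^ (1 - β) := by
    rw [sub_eq_add_neg, Real.rpow_add hu, Real.rpow_one]
  have hpow₂ : u ^ (2 - β) = u * u ^ (1 - β) := by
    rw [show 2 - β = 1 + (1 - β) by ring, Real.rpow_add hu, Real.rpow_one]
  have hW : HasDerivAt (fun s => s • deriv X s + (2 : ℝ) • (X s - Xs))
      (-(u ^ (1 - β) • gradient F (X u) + u • L (X u - Xs))) u := by
    refine (hasDerivAt_smul_deriv_add_two_smul_sub Xs hXu hVu).congr_deriv ?_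
    have h := congrArg (u • ·) hode
    simp only [smul_add, smul_smul, smul_zero, mul_div_cancel₀ _ hu.ne', hpow₁, map_sub, hXs,
      sub_zero] at h ⊢
    linear_combination (norm := module) h
  have hFX : HasDerivAt (fun s => F (X s)) ⟪gradient F (X u), deriv X u⟫ u := by
    rw [inner_gradient_left]
    exact hFu.hasFDerivAt.comp_hasDerivAt u hXu
  refine ((((hW.norm_sq).const_mul (1 / 2)).add (((hasDerivAt_pow 2 u).div_const 2).mul
    ((hXu.sub_const Xs).inner_map_self hsym))).add
    ((Real.hasDerivAt_rpow_const (Or.inl hu.ne')).mul (hFX.sub_const (F Xs)))).congr_deriv ?_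
  rw [show 2 - β - 1 = 1 - β by ring, hpow₂]
  simp only [dissipation, ← neg_sub (X u) Xs, inner_neg_right, inner_add_left, inner_add_right,
    real_inner_smul_left, real_inner_smul_right]
  rw [real_inner_comm (gradient F (X u)), real_inner_comm (gradient F (X u)),
    real_inner_comm (L (X u - Xs)) (deriv X u)]
  ring

theorem integral_dissipation (hFc : Continuous F) (hgc : Continuous (gradient F))
    (hXc : ContinuousOn X (Ioi 0)) {a b : ℝ} (ha : 0 < a) (hb : 0 < b) :
    ∫ s in a..b, dissipation F L Xs β X s
      = (∫ s in a..b, s * ⟪X s - Xs, L (X s - Xs)⟫)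
        + 2 * (∫ s in a..b,
            s ^ (1 - β) * (F Xs - F (X s) - ⟪gradient F (X s), Xs - X s⟫))
        + β * (∫ s in a..b, s ^ (1 - β) * (F (X s) - F Xs)) := by
  have hsub : uIcc a b ⊆ Ioi 0 := fun s hs => (lt_inf_iff.2 ⟨ha, hb⟩).trans_le hs.1
  have h₁ : IntervalIntegrable (fun s => s * ⟪X s - Xs, L (X s - Xs)⟫) volume a b :=
    (ContinuousOn.mono (by fun_prop) hsub).intervalIntegrable
  have h₂ : IntervalIntegrable
      (fun s => s ^ (1 - β) * (F Xs - F (X s) - ⟪gradient F (X s), Xs - X s⟫))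
      volume a b :=
    (ContinuousOn.mono (by fun_prop (disch := (intro s hs; exact ne_of_gt hs))) hsub
      ).intervalIntegrable
  have h₃ : IntervalIntegrable (fun s => s ^ (1 - β) * (F (X s) - F Xs)) volume a b :=
    (ContinuousOn.mono (by fun_prop (disch := (intro s hs; exact ne_of_gt hs))) hsub
      ).intervalIntegrable
  unfold dissipation
  rw [intervalIntegral.integral_add (h₁.add (h₂.const_mul 2)) (h₃.const_mul β),
    intervalIntegral.integral_add h₁ (h₂.const_mul 2), intervalIntegral.integral_const_mul,
    intervalIntegral.integral_const_mul]

end DistAGM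

open DistAGM in
theorem distAGM_energy_conservation_general
    {H : Type*} [NormedAddCommGroup H] [InnerProductSpace ℝ H] [FiniteDimensional ℝ H]
    (F : H → ℝ) (hF : ContDiff ℝ 1 F)
    (L : H →L[ℝ] H) (hsym : ∀ x y : H, ⟪L x, y⟫ = ⟪x, L y⟫)
    (Xs : H) (hXs : L Xs = 0)
    (β : ℝ)
    (t₀ : ℝ) (ht₀ : 0 < t₀)
    (X : ℝ → H) (hX : ContDiffOn ℝ 2 X (Set.Ioi 0))
    (hode : ∀ t > (0 : ℝ),
      deriv (deriv X) t + (3 / t) • deriv X t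
        + (t ^ (-β)) • gradient F (X t) + L (X t) = 0) :
    ∀ t ≥ t₀,
      (1 / 2) * ‖t • deriv X t + (2 : ℝ) • (X t - Xs)‖ ^ 2
        + (t ^ 2 / 2) * ⟪X t - Xs, L (X t - Xs)⟫
        + t ^ (2 - β) * (F (X t) - F Xs)
        + (∫ s in t₀..t, s * ⟪X s - Xs, L (X s - Xs)⟫)
        + 2 * (∫ s in t₀..t,
            s ^ (1 - β) * (F Xs - F (X s) - ⟪gradient F (X s), Xs - X s⟫))
        + β * (∫ s in t₀..t, s ^ (1 - β) * (F (X s) - F Xs))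
      = (1 / 2) * ‖t₀ • deriv X t₀ + (2 : ℝ) • (X t₀ - Xs)‖ ^ 2
        + (t₀ ^ 2 / 2) * ⟪X t₀ - Xs, L (X t₀ - Xs)⟫
        + t₀ ^ (2 - β) * (F (X t₀) - F Xs) := by
  intro t ht
  have hsub : uIcc t₀ t ⊆ Ioi 0 := fun s hs => ht₀.trans_le (uIcc_of_le ht ▸ hs).1
  have hXd : ∀ s > 0, HasDerivAt X (deriv X s) s := fun s hs =>
    (hX.differentiableOn two_ne_zero |>.differentiableAt (Ioi_mem_nhds hs)).hasDerivAt
  have hVd : ∀ s > 0, HasDerivAt (deriv X) (deriv (deriv X) s) s := fun s hs =>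
    ((hX.deriv_of_isOpen isOpen_Ioi one_add_one_eq_two.le).differentiableOn one_ne_zero
      |>.differentiableAt (Ioi_mem_nhds hs)).hasDerivAt
  have hXc := hX.continuousOn
  have hFc := hF.continuous
  have hgc := hF.continuous_gradient
  have hFTC := intervalIntegral.integral_eq_sub_of_hasDerivAt
    (fun s hs => hasDerivAt_energy hsym hXs (hsub hs) (hXd s (hsub hs)) (hVd s (hsub hs))
      (hF.differentiable one_ne_zero _) (hode s (hsub hs)))
    (ContinuousOn.mono (by unfold dissipation; fun_prop (disch := (intro s hs; exact ne_of_gt hs)))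
      hsub).intervalIntegrable.neg
  rw [intervalIntegral.integral_neg, integral_dissipation hFc hgc hXc ht₀
    (ht₀.trans_le ht)] at hFTC
  unfold energy at hFTC
  linarith

/-- Energy conservation law for the Dist-AGM dynamics
`Ẍ + (3/t)Ẋ + t^{−β}∇F(X) + L̃X = 0`. -/
theorem distAGM_energy_conservation
    {H : Type*} [NormedAddCommGroup H] [InnerProductSpace ℝ H] [FiniteDimensional ℝ H]
    (F : H → ℝ) (hF : ContDiff ℝ 1 F)
    (L : H →L[ℝ] H) (hsym : ∀ x y : H, ⟪L x, y⟫ = ⟪x, L y⟫)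
    (hpsd : ∀ x : H, 0 ≤ ⟪x, L x⟫)
    (Xs : H) (hXs : L Xs = 0)
    (β : ℝ) (hβ : 0 < β)
    (t₀ : ℝ) (ht₀ : 0 < t₀)
    (X : ℝ → H) (hX : ContDiffOn ℝ 2 X (Set.Ioi 0))
    (hode : ∀ t > (0 : ℝ),
      deriv (deriv X) t + (3 / t) • deriv X t
        + (t ^ (-β)) • gradient F (X t) + L (X t) = 0) :
    ∀ t ≥ t₀,
      (1 / 2) * ‖t • deriv X t + (2 : ℝ) • (X t - Xs)‖ ^ 2
        + (t ^ 2 / 2) * ⟪X t - Xs, L (X t - Xs)⟫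
        + t ^ (2 - β) * (F (X t) - F Xs)
        + (∫ s in t₀..t, s * ⟪X s - Xs, L (X s - Xs)⟫)
        + 2 * (∫ s in t₀..t,
            s ^ (1 - β) * (F Xs - F (X s) - ⟪gradient F (X s), Xs - X s⟫))
        + β * (∫ s in t₀..t, s ^ (1 - β) * (F (X s) - F Xs))
      = (1 / 2) * ‖t₀ • deriv X t₀ + (2 : ℝ) • (X t₀ - Xs)‖ ^ 2
        + (t₀ ^ 2 / 2) * ⟪X t₀ - Xs, L (X t₀ - Xs)⟫
        + t₀ ^ (2 - β) * (F (X t₀) - F Xs) :=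
  distAGM_energy_conservation_general F hF L hsym Xs hXs β t₀ ht₀ X hX hode
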